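/- arXiv:2309.13411 — 7 statements merged into one kernel-verified Lean document; each statement's English description precedes it below -/
import Mathlib

section
/- For a finite set N of size n ≥ 1, an element i ∈ N, and a set L ⊆ N \ {i}, the combinatorial identity Σ_{k=0}^{n-1-|L|} C(n-1-|L|, k) / C(n-1, |L|+k) = n / (|L|+1) holds. -/
open Finset

lemma choose_ratio_sum_aux (m l : ℕ) (hl : l ≤ m) :
    ∑ k ∈ Finset.range (m - l + 1),
      ((m - l).choose k : ℝ) / (m.choose (l + k) : ℝ)
      = ((m + 1 : ℕ) : ℝ) / (l + 1) := by
  have hml : (0:ℝ) < (m.choose l : ℝ) := by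
    exact_mod_cast Nat.choose_pos hl
  have hstep : ∀ k ∈ Finset.range (m - l + 1),
      ((m - l).choose k : ℝ) / (m.choose (l + k) : ℝ)
      = ((l + k).choose l : ℝ) / (m.choose l : ℝ) := by
    intro k hk
    rw [Finset.mem_range, Nat.lt_succ_iff] at hk
    have hlk : l + k ≤ m := by omega
    have hid := Nat.choose_mul (n := m) (k := l + k) (s := l) (Nat.le_add_right l k)
    simp only [Nat.add_sub_cancel_left] at hid
    have h1 : (0:ℝ) < (m.choose (l + k) : ℝ) := by
      exact_mod_cast Nat.choose_pos hlk
    field_simp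
    have := congrArg (Nat.cast : ℕ → ℝ) hid
    push_cast at this
    linarith [this]
  rw [Finset.sum_congr rfl hstep, ← Finset.sum_div]
  have hsum : ∑ k ∈ Finset.range (m - l + 1), ((l + k).choose l : ℝ)
      = ((m + 1).choose (l + 1) : ℝ) := by
    rw [← Nat.sum_Icc_choose m l]
    push_cast
    rw [← Finset.Ico_add_one_right_eq_Icc, Finset.sum_Ico_eq_sum_range]
    have : m + 1 - l = m - l + 1 := by omega
    rw [this]
  rw [hsum]
  have hkey : ((m + 1 : ℕ) : ℝ) * (m.choose l : ℝ)
      = ((m + 1).choose (l + 1) : ℝ) * ((l + 1 : ℕ) : ℝ) := by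
    exact_mod_cast congrArg (Nat.cast : ℕ → ℝ) (Nat.add_one_mul_choose_eq m l)
  have hl1 : (0:ℝ) < ((l:ℝ) + 1) := by positivity
  field_simp
  push_cast at hkey ⊢
  linarith [hkey]

theorem choose_ratio_sum {ι : Type*} [DecidableEq ι] (N : Finset ι) (hN : 1 ≤ N.card)
    (i : ι) (hi : i ∈ N) (L : Finset ι) (hL : L ⊆ N.erase i) :
    ∑ k ∈ Finset.range (N.card - 1 - L.card + 1),
      ((N.card - 1 - L.card).choose k : ℝ) / ((N.card - 1).choose (L.card + k) : ℝ)
      = (N.card : ℝ) / (L.card + 1) := by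
  have hl : L.card ≤ N.card - 1 := by
    have := Finset.card_le_card hL
    rwa [Finset.card_erase_of_mem hi] at this
  have := choose_ratio_sum_aux (N.card - 1) L.card hl
  rw [this]
  congr 1
  push_cast [Nat.sub_add_cancel hN]
  ring
end

section
/- The Banzhaf value can be reformulated as an allocation of Harsanyi interactions: for every i ∈ N, B(i) = Σ_{S ⊆ N, i ∈ S} I(S)/2^{|S|-1}, where B(i) = Σ_{S ⊆ N\{i}} 2^{-(n-1)} · [v(S ∪ {i}) − v(S)] and I(S) = Σ_{L ⊆ S} (-1)^{|S|-|L|} v(L). -/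
open Finset

/-- Harsanyi dividend. -/
noncomputable def harsanyi {ι : Type*} [DecidableEq ι] (v : Finset ι → ℝ) (S : Finset ι) : ℝ :=
  ∑ L ∈ S.powerset, (-1 : ℝ) ^ (S.card - L.card) * v L

lemma geom_half {ι : Type*} [DecidableEq ι] (A : Finset ι) :
    ∑ K ∈ A.powerset, ((-1 : ℝ)/2) ^ K.card = (1/2 : ℝ) ^ A.card := by
  induction A using Finset.induction_on with
  | empty => simp
  | @insert a s ha ih =>
    rw [Finset.sum_powerset_insert ha, ih, Finset.card_insert_of_notMem ha]
    have key : ∀ K ∈ s.powerset, ((-1:ℝ)/2) ^ (insert a K).card = (-1/2) * ((-1:ℝ)/2) ^ K.card := by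
      intro K hK
      rw [Finset.card_insert_of_notMem (fun h => ha (Finset.mem_powerset.1 hK h)), pow_succ]
      ring
    rw [Finset.sum_congr rfl key, ← Finset.mul_sum, ih]
    ring

lemma banzhaf_inner_sum {ι : Type*} [DecidableEq ι] (N : Finset ι) (i : ι) (hi : i ∈ N)
    (L : Finset ι) (hL : L ⊆ N) :
    ∑ S ∈ N.powerset.filter (fun S => L ⊆ S ∧ i ∈ S),
      (-1 : ℝ) ^ (S.card - L.card) / 2 ^ (S.card - 1)
    = (if i ∈ L then (1:ℝ) else -1) / 2 ^ (N.card - 1) := by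
  classical
  set B := insert i L with hB
  have hBN : B ⊆ N := Finset.insert_subset hi hL
  have hfilter : N.powerset.filter (fun S => L ⊆ S ∧ i ∈ S)
      = N.powerset.filter (fun S => B ⊆ S) := by
    apply Finset.filter_congr
    intro S _
    simp [hB, Finset.insert_subset_iff, and_comm]
  rw [hfilter]
  have hbij : ∑ S ∈ N.powerset.filter (fun S => B ⊆ S),
      (-1 : ℝ) ^ (S.card - L.card) / 2 ^ (S.card - 1)
      = ∑ K ∈ (N \ B).powerset, (-1 : ℝ) ^ ((K ∪ B).card - L.card) / 2 ^ ((K ∪ B).card - 1) := by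
    apply Finset.sum_bij' (fun S _ => S \ B) (fun K _ => K ∪ B)
    · intro S hS
      simp only [Finset.mem_filter, Finset.mem_powerset] at hS
      exact Finset.mem_powerset.2 (Finset.sdiff_subset_sdiff hS.1 le_rfl)
    · intro K hK
      simp only [Finset.mem_powerset] at hK
      simp only [Finset.mem_filter, Finset.mem_powerset]
      constructor
      · exact Finset.union_subset (hK.trans (Finset.sdiff_subset)) hBN
      · exact Finset.subset_union_right
    · intro S hS
      simp only [Finset.mem_filter, Finset.mem_powerset] at hS
      exact Finset.sdiff_union_of_subset hS.2
    · intro K hK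
      simp only [Finset.mem_powerset] at hK
      have hd : Disjoint K B := Finset.disjoint_of_subset_left hK Finset.sdiff_disjoint
      exact Finset.union_sdiff_cancel_right hd
    · intro S hS
      simp only [Finset.mem_filter, Finset.mem_powerset] at hS
      rw [Finset.sdiff_union_of_subset hS.2]
  rw [hbij]
  have hcard : ∀ K ∈ (N \ B).powerset, (K ∪ B).card = K.card + B.card := by
    intro K hK
    simp only [Finset.mem_powerset] at hK
    exact Finset.card_union_of_disjoint (Finset.disjoint_of_subset_left hK Finset.sdiff_disjoint)
  have hNB : (N \ B).card = N.card - B.card := Finset.card_sdiff_of_subset hBN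
  have hBcardN : B.card ≤ N.card := Finset.card_le_card hBN
  have hN1 : 1 ≤ N.card := Finset.card_pos.2 ⟨i, hi⟩
  by_cases hiL : i ∈ L
  · -- B = L
    have hBL : B = L := Finset.insert_eq_self.2 hiL
    have hL1 : 1 ≤ L.card := Finset.card_pos.2 ⟨i, hiL⟩
    have key : ∀ K ∈ (N \ B).powerset,
        (-1 : ℝ) ^ ((K ∪ B).card - L.card) / 2 ^ ((K ∪ B).card - 1)
        = ((-1:ℝ)/2) ^ K.card * (1/2) ^ (L.card - 1) := by
      intro K hK
      rw [hcard K hK, hBL]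
      have e1 : K.card + L.card - L.card = K.card := by omega
      have e2 : K.card + L.card - 1 = K.card + (L.card - 1) := by omega
      rw [e1, e2, pow_add, div_pow, div_pow]
      field_simp
      simp
    rw [Finset.sum_congr rfl key, ← Finset.sum_mul, geom_half, if_pos hiL, ← pow_add]
    have hBLc : B.card = L.card := by rw [hBL]
    have he : (N \ B).card + (L.card - 1) = N.card - 1 := by omega
    rw [he, div_pow, one_pow]
  · -- B = insert i L, card = L.card + 1
    have hBcard : B.card = L.card + 1 := Finset.card_insert_of_notMem hiL
    have key : ∀ K ∈ (N \ B).powerset,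
        (-1 : ℝ) ^ ((K ∪ B).card - L.card) / 2 ^ ((K ∪ B).card - 1)
        = ((-1:ℝ)/2) ^ K.card * (-(1/2) ^ L.card) := by
      intro K hK
      rw [hcard K hK, hBcard]
      have e1 : K.card + (L.card + 1) - L.card = K.card + 1 := by omega
      have e2 : K.card + (L.card + 1) - 1 = K.card + L.card := by omega
      rw [e1, e2, pow_succ, pow_add, div_pow, div_pow]
      field_simp
      simp
    rw [Finset.sum_congr rfl key, ← Finset.sum_mul, geom_half, if_neg hiL, mul_neg, ← pow_add]
    have he : (N \ B).card + L.card = N.card - 1 := by omega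
    rw [he, div_pow, one_pow]
    ring

theorem banzhaf_as_interaction_allocation {ι : Type*} [DecidableEq ι]
    (N : Finset ι) (v : Finset ι → ℝ) (i : ι) (hi : i ∈ N) :
    ∑ S ∈ (N.erase i).powerset, (v (insert i S) - v S) / 2 ^ (N.card - 1)
    = ∑ S ∈ N.powerset.filter (fun S => i ∈ S), harsanyi v S / 2 ^ (S.card - 1) := by
  classical
  have hR : ∑ S ∈ N.powerset.filter (fun S => i ∈ S), harsanyi v S / 2 ^ (S.card - 1)
      = ∑ S ∈ N.powerset.filter (fun S => i ∈ S), ∑ L ∈ S.powerset,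
          ((-1 : ℝ) ^ (S.card - L.card) / 2 ^ (S.card - 1)) * v L := by
    apply Finset.sum_congr rfl
    intro S _
    rw [harsanyi, Finset.sum_div]
    apply Finset.sum_congr rfl
    intro L _
    ring
  rw [hR]
  have hcond : ∀ (S L : Finset ι),
      S ∈ N.powerset.filter (fun S => i ∈ S) ∧ L ∈ S.powerset ↔
      S ∈ N.powerset.filter (fun S => L ⊆ S ∧ i ∈ S) ∧ L ∈ N.powerset := by
    intro S L
    simp only [Finset.mem_filter, Finset.mem_powerset]
    constructor
    · rintro ⟨⟨hSN, hiS⟩, hLS⟩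
      exact ⟨⟨hSN, hLS, hiS⟩, hLS.trans hSN⟩
    · rintro ⟨⟨hSN, hLS, hiS⟩, _⟩
      exact ⟨⟨hSN, hiS⟩, hLS⟩
  rw [Finset.sum_comm' hcond]
  have hcoef : ∀ L ∈ N.powerset,
      ∑ S ∈ N.powerset.filter (fun S => L ⊆ S ∧ i ∈ S),
        ((-1 : ℝ) ^ (S.card - L.card) / 2 ^ (S.card - 1)) * v L
      = ((if i ∈ L then (1:ℝ) else -1) / 2 ^ (N.card - 1)) * v L := by
    intro L hL
    rw [← Finset.sum_mul, banzhaf_inner_sum N i hi L (Finset.mem_powerset.1 hL)]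
  rw [Finset.sum_congr rfl hcoef]
  -- split powerset by i ∈ L
  rw [← Finset.sum_filter_add_sum_filter_not N.powerset (fun L => i ∈ L)]
  have h1 : ∑ S ∈ (N.erase i).powerset, v (insert i S) / 2 ^ (N.card - 1)
      = ∑ L ∈ N.powerset.filter (fun L => i ∈ L),
        ((if i ∈ L then (1:ℝ) else -1) / 2 ^ (N.card - 1)) * v L := by
    apply Finset.sum_bij' (fun S _ => insert i S) (fun L _ => L.erase i)
    · intro S hS
      simp only [Finset.mem_powerset] at hS
      exact Finset.erase_insert (fun h => (Finset.mem_erase.1 (hS h)).1 rfl)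
    · intro L hL
      simp only [Finset.mem_filter] at hL
      exact Finset.insert_erase hL.2
    · intro S hS
      rw [if_pos (Finset.mem_insert_self i S)]
      ring
    · intro S hS
      simp only [Finset.mem_powerset] at hS
      simp only [Finset.mem_filter, Finset.mem_powerset]
      exact ⟨Finset.insert_subset hi (hS.trans (Finset.erase_subset i N)),
        Finset.mem_insert_self i S⟩
    · intro L hL
      simp only [Finset.mem_filter, Finset.mem_powerset] at hL
      exact Finset.mem_powerset.2 (Finset.erase_subset_erase i hL.1)
  have h2 : ∑ L ∈ N.powerset.filter (fun L => ¬ i ∈ L),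
      ((if i ∈ L then (1:ℝ) else -1) / 2 ^ (N.card - 1)) * v L
      = ∑ S ∈ (N.erase i).powerset, -(v S / 2 ^ (N.card - 1)) := by
    have hset : N.powerset.filter (fun L => ¬ i ∈ L) = (N.erase i).powerset := by
      ext S
      simp only [Finset.mem_filter, Finset.mem_powerset, Finset.subset_erase]
    rw [hset]
    apply Finset.sum_congr rfl
    intro S hS
    simp only [Finset.mem_powerset, Finset.subset_erase] at hS
    rw [if_neg hS.2]
    ring
  rw [← h1, h2]
  rw [← Finset.sum_add_distrib]
  apply Finset.sum_congr rfl
  intro S _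
  ring
end

section
/- For any nonempty coalition S ⊆ N, φ(S) = Σ_{i ∈ S} φ_Sh(i) − Σ_{T ⊆ N : T ∩ S ≠ ∅ and T ∩ S ≠ S} (|T ∩ S|/|T|) I(T), where φ(S) is the coalition attribution, φ_Sh(i) is the Shapley value and I is the Harsanyi dividend. -/
open Finset

noncomputable def shapley {ι : Type*} [DecidableEq ι] (N : Finset ι) (v : Finset ι → ℝ)
    (i : ι) : ℝ :=
  ∑ T ∈ N.powerset.filter (fun T => i ∈ T), harsanyi v T / T.card

noncomputable def coalAttr {ι : Type*} [DecidableEq ι] (N : Finset ι) (v : Finset ι → ℝ)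
    (S : Finset ι) : ℝ :=
  ∑ T ∈ N.powerset.filter (fun T => S ⊆ T), (S.card : ℝ) / T.card * harsanyi v T

theorem coalAttr_vs_sum_shapley {ι : Type*} [DecidableEq ι]
    (N : Finset ι) (v : Finset ι → ℝ) (S : Finset ι) (hS : S ⊆ N) (hne : S.Nonempty) :
    coalAttr N v S = (∑ i ∈ S, shapley N v i)
      - ∑ T ∈ N.powerset.filter (fun T => (T ∩ S).Nonempty ∧ T ∩ S ≠ S),
          ((T ∩ S).card : ℝ) / T.card * harsanyi v T := by
  have key : (∑ i ∈ S, shapley N v i)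
      = ∑ T ∈ N.powerset, ((T ∩ S).card : ℝ) / T.card * harsanyi v T := by
    simp only [shapley, Finset.sum_filter]
    rw [Finset.sum_comm]
    refine Finset.sum_congr rfl fun T hT => ?_
    rw [← Finset.sum_filter, Finset.sum_const, Finset.filter_mem_eq_inter,
      Finset.inter_comm, nsmul_eq_mul]
    ring
  rw [key, ← Finset.sum_filter_add_sum_filter_not N.powerset (fun T => S ⊆ T)]
  have h1 : ∑ T ∈ N.powerset.filter (fun T => S ⊆ T),
      ((T ∩ S).card : ℝ) / T.card * harsanyi v T = coalAttr N v S := by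
    refine Finset.sum_congr rfl fun T hT => ?_
    rw [Finset.mem_filter] at hT
    rw [Finset.inter_eq_right.mpr hT.2]
  have h2 : ∑ T ∈ N.powerset.filter (fun T => ¬ S ⊆ T),
      ((T ∩ S).card : ℝ) / T.card * harsanyi v T
      = ∑ T ∈ N.powerset.filter (fun T => (T ∩ S).Nonempty ∧ T ∩ S ≠ S),
          ((T ∩ S).card : ℝ) / T.card * harsanyi v T := by
    refine (Finset.sum_subset ?_ ?_).symm
    · intro T hT
      rw [Finset.mem_filter] at hT ⊢
      exact ⟨hT.1, fun h => hT.2.2 (Finset.inter_eq_right.mpr h)⟩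
    · intro T hT hT'
      rw [Finset.mem_filter] at hT hT'
      have : T ∩ S = ∅ := by
        by_contra h
        exact hT' ⟨hT.1, Finset.nonempty_iff_ne_empty.mpr h,
          fun he => hT.2 (Finset.inter_eq_right.mp he)⟩
      rw [this]
      simp
  rw [h1, h2]
  ring
end

section
/- If all interactions containing some but not all variables of a nonempty coalition S vanish, i.e., I(T) = 0 for all T ⊆ N with T ∩ S ≠ ∅ and S ⊄ T, then for every i ∈ S, the Shapley value satisfies φ_Sh(i) = φ(S)/|S|. -/
open Finset

theorem shapley_eq_coalAttr_div {ι : Type*} [DecidableEq ι]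
    (N : Finset ι) (v : Finset ι → ℝ) (S : Finset ι) (hS : S ⊆ N) (hne : S.Nonempty)
    (hvanish : ∀ T ⊆ N, (T ∩ S).Nonempty → ¬ S ⊆ T → harsanyi v T = 0)
    (i : ι) (hi : i ∈ S) :
    shapley N v i = coalAttr N v S / S.card := by
  have hcard : (S.card : ℝ) ≠ 0 := by
    exact_mod_cast (card_pos.mpr hne).ne'
  unfold shapley coalAttr
  rw [Finset.sum_div]
  have hsub : N.powerset.filter (fun T => S ⊆ T) ⊆ N.powerset.filter (fun T => i ∈ T) := by
    intro T hT
    simp only [mem_filter, mem_powerset] at hT ⊢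
    exact ⟨hT.1, hT.2 hi⟩
  rw [← Finset.sum_subset hsub]
  · apply Finset.sum_congr rfl
    intro T hT
    rw [eq_div_iff hcard]
    ring
  · intro T hT hT'
    simp only [mem_filter, mem_powerset] at hT hT'
    have : harsanyi v T = 0 := by
      apply hvanish T hT.1 ⟨i, mem_inter.mpr ⟨hT.2, hi⟩⟩
      exact fun h => hT' ⟨hT.1, h⟩
    simp [this]
end

section
/- Efficiency for coalition attribution: for any nonempty S ⊆ N, v(N) − v(∅) = φ(S) + Σ_{i ∈ N\S} φ_Sh(i) + Σ_{T ⊆ N : T ∩ S ≠ ∅, T ∩ S ≠ S} (|T ∩ S|/|T|) I(T). -/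
open Finset

lemma alt_sum_real {ι : Type*} [DecidableEq ι] (x : Finset ι) :
    (∑ m ∈ x.powerset, (-1 : ℝ) ^ m.card) = if x = ∅ then 1 else 0 := by
  have h := Finset.sum_powerset_neg_one_pow_card (x := x)
  have : ((∑ m ∈ x.powerset, (-1 : ℤ) ^ m.card : ℤ) : ℝ)
      = ∑ m ∈ x.powerset, (-1 : ℝ) ^ m.card := by push_cast; rfl
  rw [← this, h]
  split <;> norm_num

lemma alt_sum_filter {ι : Type*} [DecidableEq ι] (N L : Finset ι) (hL : L ⊆ N) :
    (∑ T ∈ N.powerset.filter (fun T => L ⊆ T), (-1 : ℝ) ^ (T.card - L.card))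
      = if L = N then 1 else 0 := by
  have key : (∑ T ∈ N.powerset.filter (fun T => L ⊆ T), (-1 : ℝ) ^ (T.card - L.card))
      = ∑ U ∈ (N \ L).powerset, (-1 : ℝ) ^ U.card := by
    refine Finset.sum_bij' (fun T _ => T \ L) (fun U _ => U ∪ L) ?_ ?_ ?_ ?_ ?_
    · intro T hT
      simp only [mem_filter, mem_powerset] at hT ⊢
      exact sdiff_subset_sdiff hT.1 (le_refl L)
    · intro U hU
      simp only [mem_powerset] at hU ⊢
      refine Finset.mem_filter.mpr ⟨Finset.mem_powerset.mpr ?_, Finset.subset_union_right⟩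
      exact Finset.union_subset (hU.trans (Finset.sdiff_subset)) hL
    · intro T hT
      simp only [mem_filter, mem_powerset] at hT
      exact Finset.sdiff_union_of_subset hT.2
    · intro U hU
      simp only [mem_powerset] at hU
      show (U ∪ L) \ L = U
      rw [Finset.union_sdiff_right]
      exact Finset.sdiff_eq_self_of_disjoint (Finset.disjoint_of_subset_left hU Finset.sdiff_disjoint)
    · intro T hT
      simp only [mem_filter, mem_powerset] at hT
      rw [Finset.card_sdiff_of_subset hT.2]
  rw [key, alt_sum_real]
  by_cases h : L = N
  · subst h; simp
  · rw [if_neg h, if_neg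
      (fun hc => h (Finset.Subset.antisymm hL (Finset.sdiff_eq_empty_iff_subset.mp hc)))]

lemma harsanyi_sum {ι : Type*} [DecidableEq ι] (v : Finset ι → ℝ) (N : Finset ι) :
    ∑ T ∈ N.powerset, harsanyi v T = v N := by
  unfold harsanyi
  rw [Finset.sum_comm' (s' := fun L => N.powerset.filter (fun T => L ⊆ T)) (t' := N.powerset)]
  · have : ∀ L ∈ N.powerset,
        (∑ T ∈ N.powerset.filter (fun T => L ⊆ T), (-1 : ℝ) ^ (T.card - L.card) * v L)
          = (if L = N then 1 else 0) * v L := by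
      intro L hL
      rw [← Finset.sum_mul, alt_sum_filter N L (Finset.mem_powerset.mp hL)]
    rw [Finset.sum_congr rfl this]
    simp [Finset.sum_ite_eq' N.powerset N, Finset.mem_powerset]
  · intro T L
    simp only [mem_powerset, mem_filter]
    constructor
    · rintro ⟨h1, h2⟩; exact ⟨⟨h1, h2⟩, h2.trans h1⟩
    · rintro ⟨⟨h1, h2⟩, _⟩; exact ⟨h1, h2⟩

lemma harsanyi_empty {ι : Type*} [DecidableEq ι] (v : Finset ι → ℝ) :
    harsanyi v (∅ : Finset ι) = v ∅ := by
  simp [harsanyi]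

lemma shapley_sum {ι : Type*} [DecidableEq ι] (N : Finset ι) (v : Finset ι → ℝ) (S : Finset ι) :
    (∑ i ∈ N \ S, shapley N v i)
      = ∑ T ∈ N.powerset, ((T \ S).card : ℝ) / T.card * harsanyi v T := by
  unfold shapley
  rw [Finset.sum_comm' (s' := fun T => (N \ S).filter (fun i => i ∈ T)) (t' := N.powerset)]
  · refine Finset.sum_congr rfl fun T hT => ?_
    rw [Finset.sum_const, Finset.filter_mem_eq_inter]
    have hTN : T ⊆ N := Finset.mem_powerset.mp hT
    have : (N \ S) ∩ T = T \ S := by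
      ext i
      simp only [Finset.mem_inter, Finset.mem_sdiff]
      constructor
      · rintro ⟨⟨_, h2⟩, h3⟩; exact ⟨h3, h2⟩
      · rintro ⟨h1, h2⟩; exact ⟨⟨hTN h1, h2⟩, h1⟩
    rw [this, nsmul_eq_mul]
    ring
  · intro i T
    simp only [mem_filter, mem_powerset, mem_sdiff]
    tauto

theorem coalAttr_efficiency {ι : Type*} [DecidableEq ι]
    (N : Finset ι) (hN : N.Nonempty) (v : Finset ι → ℝ)
    (S : Finset ι) (hS : S ⊆ N) (hne : S.Nonempty) :
    v N - v ∅ = coalAttr N v S + (∑ i ∈ N \ S, shapley N v i)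
      + ∑ T ∈ N.powerset.filter (fun T => (T ∩ S).Nonempty ∧ T ∩ S ≠ S),
          ((T ∩ S).card : ℝ) / T.card * harsanyi v T := by
  classical
  rw [shapley_sum]
  unfold coalAttr
  rw [Finset.sum_filter, Finset.sum_filter]
  rw [← Finset.sum_add_distrib, ← Finset.sum_add_distrib]
  have lhs_eq : v N - v ∅
      = ∑ T ∈ N.powerset, (if T = ∅ then 0 else 1) * harsanyi v T := by
    have h1 : ∑ T ∈ N.powerset, (if T = ∅ then 0 else 1 : ℝ) * harsanyi v T
        = (∑ T ∈ N.powerset, harsanyi v T) - harsanyi v ∅ := by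
      have step : ∀ T ∈ N.powerset, (if T = ∅ then (0:ℝ) else 1) * harsanyi v T
          = harsanyi v T - (if T = ∅ then harsanyi v T else 0) := by
        intro T _; split <;> ring
      rw [Finset.sum_congr rfl step, Finset.sum_sub_distrib,
        Finset.sum_ite_eq' N.powerset (∅ : Finset ι) (fun T => harsanyi v T)]
      simp
    rw [h1, harsanyi_sum, harsanyi_empty]
  rw [lhs_eq]
  refine Finset.sum_congr rfl fun T hT => ?_
  have hTN : T ⊆ N := Finset.mem_powerset.mp hT
  by_cases hTe : T = ∅
  · subst hTe
    have h1 : ¬ S ⊆ (∅ : Finset ι) := by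
      intro h
      exact Finset.Nonempty.ne_empty hne (Finset.subset_empty.mp h)
    simp [h1, Finset.not_nonempty_empty]
  · rw [if_neg hTe, one_mul]
    have hTc : (T.card : ℝ) ≠ 0 := by
      simp [Finset.card_eq_zero, hTe]
    have hcards : ((T ∩ S).card : ℝ) + ((T \ S).card : ℝ) = T.card := by
      rw [← Nat.cast_add, Finset.card_inter_add_card_sdiff]
    have hsub : (T ∩ S = S) ↔ S ⊆ T := Finset.inter_eq_right
    by_cases hST : S ⊆ T
    · have hint : T ∩ S = S := hsub.mpr hST
      rw [if_pos hST, if_neg (by rw [hint]; tauto)]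
      have key : (↑(#(T ∩ S)) / ↑(#T)) * harsanyi v T + (↑(#(T \ S)) / ↑(#T)) * harsanyi v T
          = harsanyi v T := by
        rw [← add_mul, ← add_div, hcards, div_self hTc, one_mul]
      rw [hint] at key
      linarith [key]
    · rw [if_neg hST]
      by_cases hint : (T ∩ S).Nonempty
      · rw [if_pos ⟨hint, fun h => hST (hsub.mp h)⟩]
        have key : (↑(#(T ∩ S)) / ↑(#T)) * harsanyi v T + (↑(#(T \ S)) / ↑(#T)) * harsanyi v T
            = harsanyi v T := by
          rw [← add_mul, ← add_div, hcards, div_self hTc, one_mul]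
        linarith [key]
      · rw [if_neg (by tauto)]
        have h0 : (T ∩ S).card = 0 := by
          rw [Finset.card_eq_zero, ← Finset.not_nonempty_iff_eq_empty]; exact hint
        rw [zero_add, add_zero]
        have : ((T \ S).card : ℝ) = T.card := by
          rw [← hcards, h0]; simp
        rw [this, div_self hTc, one_mul]
end

section
/- Symmetry for coalition attribution: if i, j ∈ N satisfy v(L ∪ {i}) = v(L ∪ {j}) for all L ⊆ N \ {i, j}, then for every S ⊆ N \ {i, j}, φ(S ∪ {i}) = φ(S ∪ {j}), where φ is the coalition attribution based on the Harsanyi dividend of v. -/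
open Finset

lemma image_swap_iff {ι : Type*} [DecidableEq ι] (i j : ι) (L : Finset ι)
    (h : i ∈ L ↔ j ∈ L) : L.image (Equiv.swap i j) = L := by
  apply Finset.eq_of_subset_of_card_le
  · intro x hx
    simp only [Finset.mem_image] at hx
    obtain ⟨y, hy, rfl⟩ := hx
    rcases eq_or_ne y i with rfl | hyi
    · rw [Equiv.swap_apply_left]; exact h.1 hy
    rcases eq_or_ne y j with rfl | hyj
    · rw [Equiv.swap_apply_right]; exact h.2 hy
    · rw [Equiv.swap_apply_of_ne_of_ne hyi hyj]; exact hy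
  · rw [Finset.card_image_of_injective _ (Equiv.injective _)]

lemma image_swap_mem {ι : Type*} [DecidableEq ι] (i j : ι) (L : Finset ι)
    (hiL : i ∈ L) (hjL : j ∉ L) : L.image (Equiv.swap i j) = insert j (L.erase i) := by
  ext x
  simp only [Finset.mem_image, Finset.mem_insert, Finset.mem_erase]
  constructor
  · rintro ⟨y, hy, rfl⟩
    rcases eq_or_ne y i with rfl | hyi
    · left; simp
    rcases eq_or_ne y j with rfl | hyj
    · exact absurd hy hjL
    · rw [Equiv.swap_apply_of_ne_of_ne hyi hyj]; right; exact ⟨hyi, hy⟩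
  · rintro (rfl | ⟨hxi, hx⟩)
    · exact ⟨i, hiL, by simp⟩
    · refine ⟨x, hx, Equiv.swap_apply_of_ne_of_ne hxi ?_⟩
      rintro rfl; exact hjL hx

lemma v_image_swap {ι : Type*} [DecidableEq ι] (N : Finset ι) (v : Finset ι → ℝ) (i j : ι)
    (hsym : ∀ L ⊆ N \ {i, j}, v (insert i L) = v (insert j L))
    (L : Finset ι) (hL : L ⊆ N) : v (L.image (Equiv.swap i j)) = v L := by
  by_cases hiL : i ∈ L <;> by_cases hjL : j ∈ L
  · rw [image_swap_iff i j L (by tauto)]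
  · rw [image_swap_mem i j L hiL hjL]
    have h1 : L.erase i ⊆ N \ {i, j} := by
      intro x hx
      rw [Finset.mem_erase] at hx
      rw [Finset.mem_sdiff, Finset.mem_insert, Finset.mem_singleton]
      refine ⟨hL hx.2, ?_⟩
      rintro (rfl | rfl)
      · exact hx.1 rfl
      · exact hjL hx.2
    rw [← hsym _ h1, Finset.insert_erase hiL]
  · rw [Equiv.swap_comm, image_swap_mem j i L hjL hiL]
    have h1 : L.erase j ⊆ N \ {i, j} := by
      intro x hx
      rw [Finset.mem_erase] at hx
      rw [Finset.mem_sdiff, Finset.mem_insert, Finset.mem_singleton]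
      refine ⟨hL hx.2, ?_⟩
      rintro (rfl | rfl)
      · exact hiL hx.2
      · exact hx.1 rfl
    rw [hsym _ h1, Finset.insert_erase hjL]
  · rw [image_swap_iff i j L (by tauto)]

lemma image_swap_swap {ι : Type*} [DecidableEq ι] (i j : ι) (L : Finset ι) :
    (L.image (Equiv.swap i j)).image (Equiv.swap i j) = L := by
  rw [Finset.image_image]
  have : (⇑(Equiv.swap i j) ∘ ⇑(Equiv.swap i j)) = id := by
    funext x; simp
  rw [this, Finset.image_id]

lemma harsanyi_image_swap {ι : Type*} [DecidableEq ι] (N : Finset ι) (v : Finset ι → ℝ) (i j : ι)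
    (hsym : ∀ L ⊆ N \ {i, j}, v (insert i L) = v (insert j L))
    (T : Finset ι) (hT : T ⊆ N) : harsanyi v T = harsanyi v (T.image (Equiv.swap i j)) := by
  unfold harsanyi
  refine Finset.sum_nbij' (fun L => L.image (Equiv.swap i j))
    (fun L => L.image (Equiv.swap i j)) ?_ ?_ ?_ ?_ ?_
  · intro L hL
    rw [Finset.mem_powerset] at hL ⊢
    exact Finset.image_subset_image hL
  · intro L hL
    rw [Finset.mem_powerset] at hL ⊢
    have := Finset.image_subset_image (f := ⇑(Equiv.swap i j)) hL
    rwa [image_swap_swap] at this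
  · intro L _
    exact image_swap_swap i j L
  · intro L _
    exact image_swap_swap i j L
  · intro L hL
    rw [Finset.mem_powerset] at hL
    rw [Finset.card_image_of_injective _ (Equiv.injective _),
      Finset.card_image_of_injective _ (Equiv.injective _),
      v_image_swap N v i j hsym L (hL.trans hT)]

theorem coalAttr_symmetry {ι : Type*} [DecidableEq ι]
    (N : Finset ι) (v : Finset ι → ℝ) (i j : ι) (hi : i ∈ N) (hj : j ∈ N)
    (hsym : ∀ L ⊆ N \ {i, j}, v (insert i L) = v (insert j L))
    (S : Finset ι) (hS : S ⊆ N \ {i, j}) :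
    coalAttr N v (insert i S) = coalAttr N v (insert j S) := by
  have hSi : i ∉ S := fun h => by simpa using (hS h)
  have hSj : j ∉ S := fun h => by simpa using (hS h)
  have hSsub : S ⊆ N := fun x hx => (Finset.mem_sdiff.1 (hS hx)).1
  have hSimg : S.image (Equiv.swap i j) = S := by
    apply image_swap_iff
    constructor <;> intro h <;> [exact absurd h hSi; exact absurd h hSj]
  have hNimg : N.image (Equiv.swap i j) = N := image_swap_iff i j N (by tauto)
  unfold coalAttr
  refine Finset.sum_nbij' (fun T => T.image (Equiv.swap i j))
    (fun T => T.image (Equiv.swap i j)) ?_ ?_ ?_ ?_ ?_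
  · intro T hT
    rw [Finset.mem_filter, Finset.mem_powerset] at hT ⊢
    constructor
    · have := Finset.image_subset_image (f := ⇑(Equiv.swap i j)) hT.1
      rwa [hNimg] at this
    · have := Finset.image_subset_image (f := ⇑(Equiv.swap i j)) hT.2
      rwa [Finset.image_insert, Equiv.swap_apply_left, hSimg] at this
  · intro T hT
    rw [Finset.mem_filter, Finset.mem_powerset] at hT ⊢
    constructor
    · have := Finset.image_subset_image (f := ⇑(Equiv.swap i j)) hT.1
      rwa [hNimg] at this
    · have := Finset.image_subset_image (f := ⇑(Equiv.swap i j)) hT.2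
      rwa [Finset.image_insert, Equiv.swap_apply_right, hSimg] at this
  · intro T _
    exact image_swap_swap i j T
  · intro T _
    exact image_swap_swap i j T
  · intro T hT
    rw [Finset.mem_filter, Finset.mem_powerset] at hT
    rw [Finset.card_image_of_injective _ (Equiv.injective _),
      ← harsanyi_image_swap N v i j hsym T hT.1,
      Finset.card_insert_of_notMem hSi, Finset.card_insert_of_notMem hSj]
end

section
/- Dummy axiom for coalition attribution: if every i ∈ S is a dummy player of v (i.e., v(T ∪ {i}) = v(T) for all T ⊆ N \ {i}), then the coalition attribution satisfies φ(S) = 0. -/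
open Finset

lemma harsanyi_zero_of_dummy {ι : Type*} [DecidableEq ι] (v : Finset ι → ℝ) (T : Finset ι)
    (i : ι) (hi : i ∈ T) (hd : ∀ L ⊆ T.erase i, v (insert i L) = v L) :
    harsanyi v T = 0 := by
  set t := T.erase i with ht
  have hiT : i ∉ t := notMem_erase i T
  have hT : T = insert i t := (insert_erase hi).symm
  rw [harsanyi, hT, Finset.sum_powerset_insert hiT, ← Finset.sum_add_distrib]
  apply Finset.sum_eq_zero
  intro L hL
  have hL' := Finset.mem_powerset.mp hL
  have hiL : i ∉ L := fun h => hiT (hL' h)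
  rw [hd L hL', card_insert_of_notMem hiT, card_insert_of_notMem hiL]
  have hle : L.card ≤ t.card := card_le_card hL'
  have h1 : t.card + 1 - L.card = (t.card - L.card) + 1 := by omega
  have h2 : t.card + 1 - (L.card + 1) = t.card - L.card := by omega
  rw [h1, h2, pow_succ]
  ring

theorem coalAttr_dummy {ι : Type*} [DecidableEq ι]
    (N : Finset ι) (v : Finset ι → ℝ) (S : Finset ι) (hS : S ⊆ N) (hne : S.Nonempty)
    (hdummy : ∀ i ∈ S, ∀ T ⊆ N.erase i, v (insert i T) = v T) :
    coalAttr N v S = 0 := by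
  obtain ⟨i, hiS⟩ := hne
  apply Finset.sum_eq_zero
  intro T hT
  rw [Finset.mem_filter, Finset.mem_powerset] at hT
  obtain ⟨hTN, hST⟩ := hT
  have hiT : i ∈ T := hST hiS
  rw [harsanyi_zero_of_dummy v T i hiT
    (fun L hL => hdummy i hiS L (hL.trans (erase_subset_erase i hTN))), mul_zero]
end
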